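/- For n ≥ 1, a subset S ⊆ {1,...,n} arises as the set of positions of occurrences of the consecutive pattern FD (a flat step (1,0) immediately followed by a down step (1,−1)) in some Łukasiewicz path of length n if and only if S ⊆ {2,...,n−1} and any two distinct elements of S differ by at least 2. Consequently the number of such sets is the Fibonacci-type number f_n with f_1 = f_2 = 1 and f_n = f_{n−1} + f_{n−2} for n ≥ 3. -/

import Mathlib

/-!
An `FD` at position 1 would take the path to height `-1` after two steps, and two `FD`
occurrences cannot overlap, so the `FD` positions form a subset of `{2, …, n - 1}` without two
consecutive elements. Conversely, for such a set `S`, the path that starts with one step up by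
`|S|` and is flat afterwards, except for a down step right after each position in `S`, has `FD`
set exactly `S`: sparseness makes the step at each position of `S` flat, and the path never dips
below zero because it only descends after its first step. Splitting by whether `m` belongs to
the set shows that the sparse subsets of `{2, …, m}` obey the Fibonacci recursion.
-/

/-- A Łukasiewicz path: vertical step components, each `≥ -1`, all partial sums
nonnegative, total sum `0`. -/
def IsLukas (w : List ℤ) : Prop :=
  (∀ s ∈ w, -1 ≤ s) ∧ (∀ k, 0 ≤ (w.take k).sum) ∧ w.sum = 0

/-- The set of (1-indexed) positions of occurrences of the consecutive pattern
`FD` in `w`: position `j` with step `j` flat and step `j+1` down. -/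
def fdPos (w : List ℤ) : Finset ℕ :=
  (Finset.Icc 1 w.length).filter fun j =>
    w[j - 1]? = some 0 ∧ w[j]? = some (-1)

/-- Fibonacci-type numbers: `f 1 = f 2 = 1`, `f n = f (n-1) + f (n-2)`. -/
def fibf : ℕ → ℕ
  | 0 => 1
  | 1 => 1
  | 2 => 1
  | n + 3 => fibf (n + 2) + fibf (n + 1)

def sparseSets (m : ℕ) : Finset (Finset ℕ) :=
  (Finset.Icc 2 m).powerset.filter fun S => ∀ i ∈ S, i + 1 ∉ S

theorem mem_sparseSets {m : ℕ} {S : Finset ℕ} :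
    S ∈ sparseSets m ↔ S ⊆ Finset.Icc 2 m ∧ ∀ i ∈ S, i + 1 ∉ S := by
  simp [sparseSets]

theorem two_le_dist_iff_add_one_notMem (S : Finset ℕ) :
    (∀ i ∈ S, ∀ j ∈ S, i ≠ j → 2 ≤ Nat.dist i j) ↔ ∀ i ∈ S, i + 1 ∉ S := by
  refine ⟨fun h i hi hi' => ?_, fun h i hi j hj hij => ?_⟩
  · have := h i hi (i + 1) hi' (by omega)
    simp [Nat.dist] at this
  · rcases Nat.lt_or_gt_of_ne hij with hlt | hlt
    · have : j ≠ i + 1 := fun hj' => h i hi (hj' ▸ hj)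
      simp only [Nat.dist]; omega
    · have : i ≠ j + 1 := fun hi' => h j hj (hi' ▸ hi)
      simp only [Nat.dist]; omega

theorem filter_notMem_sparseSets (m : ℕ) :
    (sparseSets (m + 2)).filter (m + 2 ∉ ·) = sparseSets (m + 1) := by
  ext S
  simp only [Finset.mem_filter, mem_sparseSets, Finset.subset_iff, Finset.mem_Icc]
  constructor
  · rintro ⟨⟨hsub, hsparse⟩, hm⟩
    refine ⟨fun x hx => ?_, hsparse⟩
    have : x ≠ m + 2 := by rintro rfl; exact hm hx
    have := hsub hx
    omega
  · rintro ⟨hsub, hsparse⟩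
    refine ⟨⟨fun x hx => ?_, hsparse⟩, fun hm => ?_⟩
    · have := hsub hx; omega
    · have := hsub hm; omega

theorem filter_mem_sparseSets (m : ℕ) :
    (sparseSets (m + 2)).filter (m + 2 ∈ ·) = (sparseSets m).image (insert (m + 2)) := by
  ext S
  simp only [Finset.mem_filter, Finset.mem_image, mem_sparseSets, Finset.subset_iff,
    Finset.mem_Icc]
  constructor
  · rintro ⟨⟨hsub, hsparse⟩, hm⟩
    refine ⟨S.erase (m + 2), ⟨fun x hx => ?_, fun i hi hi' => ?_⟩, Finset.insert_erase hm⟩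
    · rw [Finset.mem_erase] at hx
      have : x ≠ m + 1 := by rintro rfl; exact hsparse _ hx.2 hm
      have := hsub hx.2
      omega
    · exact hsparse i (Finset.mem_of_mem_erase hi) (Finset.mem_of_mem_erase hi')
  · rintro ⟨T, ⟨hsub, hsparse⟩, rfl⟩
    refine ⟨⟨fun x hx => ?_, fun i hi hi' => ?_⟩, Finset.mem_insert_self _ _⟩
    · rcases Finset.mem_insert.mp hx with rfl | hx
      · omega
      · have := hsub hx; omega
    · rcases Finset.mem_insert.mp hi with rfl | hi <;>
        rcases Finset.mem_insert.mp hi' with hi' | hi'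
      · omega
      · have := hsub hi'; omega
      · have := hsub hi; omega
      · exact hsparse i hi hi'

theorem card_sparseSets_add_two (m : ℕ) :
    (sparseSets (m + 2)).card = (sparseSets (m + 1)).card + (sparseSets m).card := by
  have hinj : Set.InjOn (insert (m + 2)) (sparseSets m : Set (Finset ℕ)) := by
    intro T hT U hU hTU
    have hnot : ∀ V ∈ sparseSets m, m + 2 ∉ V := fun V hV h => by
      have := (mem_sparseSets.mp hV).1 h
      simp only [Finset.mem_Icc] at this
      omega
    rw [← Finset.erase_insert (hnot T hT), hTU, Finset.erase_insert (hnot U hU)]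
  rw [← Finset.card_filter_add_card_filter_not (p := (m + 2 ∈ ·)), filter_mem_sparseSets,
    filter_notMem_sparseSets, Finset.card_image_of_injOn hinj, add_comm]

theorem card_sparseSets : ∀ m, (sparseSets m).card = fibf (m + 1)
  | 0 => by decide
  | 1 => by decide
  | m + 2 => by
    rw [card_sparseSets_add_two, card_sparseSets (m + 1), card_sparseSets m]
    rfl

section

variable {w : List ℤ}

theorem mem_fdPos {j : ℕ} :
    j ∈ fdPos w ↔ 1 ≤ j ∧ w[j - 1]? = some 0 ∧ w[j]? = some (-1) := by
  simp only [fdPos, Finset.mem_filter, Finset.mem_Icc]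
  constructor
  · rintro ⟨⟨hj, -⟩, h⟩
    exact ⟨hj, h⟩
  · rintro ⟨hj, h0, h1⟩
    have := (List.getElem?_eq_some_iff.mp h1).1
    exact ⟨⟨hj, by omega⟩, h0, h1⟩

theorem add_one_notMem_fdPos {j : ℕ} (hj : j ∈ fdPos w) : j + 1 ∉ fdPos w := by
  intro hj'
  have h0 := (mem_fdPos.mp hj').2.1
  rw [Nat.add_sub_cancel, (mem_fdPos.mp hj).2.2] at h0
  simp at h0

theorem one_notMem_fdPos (hw : IsLukas w) : 1 ∉ fdPos w := by
  intro h
  obtain ⟨-, h0, h1⟩ := mem_fdPos.mp h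
  match w, h0, h1 with
  | a :: b :: _, h0, h1 =>
    simp only [Nat.sub_self, List.getElem?_cons_zero, List.getElem?_cons_succ,
      Option.some.injEq] at h0 h1
    have := hw.2.1 2
    simp [h0, h1] at this

theorem fdPos_mem_sparseSets (hw : IsLukas w) :
    fdPos w ∈ sparseSets (w.length - 1) := by
  refine mem_sparseSets.mpr ⟨fun j hj => ?_, fun j hj => add_one_notMem_fdPos hj⟩
  have hj1 : j ≠ 1 := by rintro rfl; exact one_notMem_fdPos hw hj
  obtain ⟨hj0, -, hjw⟩ := mem_fdPos.mp hj
  have := (List.getElem?_eq_some_iff.mp hjw).1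
  simp only [Finset.mem_Icc]
  omega

theorem isLukas_of_forall_mem_tail_nonpos (hw : ∀ s ∈ w, -1 ≤ s)
    (htail : ∀ s ∈ w.tail, s ≤ 0) (hsum : w.sum = 0) : IsLukas w := by
  refine ⟨hw, fun k => ?_, hsum⟩
  rcases k with _ | k
  · simp
  · have hdrop : (w.drop (k + 1)).sum ≤ 0 := by
      rw [← List.drop_tail]
      simpa using List.sum_le_card_nsmul _ 0 fun s hs => htail s (List.mem_of_mem_drop hs)
    have := List.sum_take_add_sum_drop w (k + 1)
    omega

end

def lukasPathOf (n : ℕ) (S : Finset ℕ) : List ℤ :=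
  (S.card : ℤ) :: (List.range' 1 (n - 1)).map fun t => if t ∈ S then -1 else 0

section

variable {n : ℕ} {S : Finset ℕ}

theorem length_lukasPathOf (hn : 1 ≤ n) : (lukasPathOf n S).length = n := by
  simp only [lukasPathOf, List.length_cons, List.length_map, List.length_range']
  omega

theorem getElem?_lukasPathOf_add_one {j : ℕ} (hj : j + 1 < n) :
    (lukasPathOf n S)[j + 1]? = some (if j + 1 ∈ S then -1 else 0) := by
  rw [lukasPathOf, List.getElem?_cons_succ, List.getElem?_map, List.getElem?_range' (by omega)]
  simp [add_comm]

theorem isLukas_lukasPathOf (hS : S ⊆ Finset.Ico 1 n) :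
    IsLukas (lukasPathOf n S) := by
  have hstep : ∀ s ∈ (List.range' 1 (n - 1)).map fun t => if t ∈ S then (-1 : ℤ) else 0,
      s = -1 ∨ s = 0 := by
    simp only [List.mem_map]
    rintro s ⟨t, -, rfl⟩
    split_ifs <;> simp
  have hsum : ((List.range' 1 (n - 1)).map fun t => if t ∈ S then (-1 : ℤ) else 0).sum
      = -S.card := by
    -- `Finset.Ico 1 n` on `ℕ` is definitionally built from `List.range' 1 (n - 1)`.
    change ∑ t ∈ Finset.Ico 1 n, (if t ∈ S then (-1 : ℤ) else 0) = _
    rw [Finset.sum_ite_mem, Finset.inter_eq_right.mpr hS]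
    simp
  refine isLukas_of_forall_mem_tail_nonpos (fun s hs => ?_) (fun s hs => ?_) ?_
  · rcases List.mem_cons.mp hs with rfl | hs
    · simp
    · rcases hstep s hs with rfl | rfl <;> simp
  · rcases hstep s hs with rfl | rfl <;> simp
  · rw [lukasPathOf, List.sum_cons, hsum, add_neg_cancel]

theorem fdPos_lukasPathOf (hS : S ∈ sparseSets (n - 1)) :
    fdPos (lukasPathOf n S) = S := by
  obtain ⟨hsub, hsparse⟩ := mem_sparseSets.mp hS
  ext j
  rw [mem_fdPos]
  constructor
  · rintro ⟨hj, -, hdown⟩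
    obtain ⟨i, rfl⟩ := Nat.exists_eq_add_of_le' hj
    have hi : i + 1 < n := by
      have := (List.getElem?_eq_some_iff.mp hdown).1
      simp only [lukasPathOf, List.length_cons, List.length_map, List.length_range'] at this
      omega
    rw [getElem?_lukasPathOf_add_one hi] at hdown
    by_contra hiS
    simp [hiS] at hdown
  · intro hj
    have := Finset.mem_Icc.mp (hsub hj)
    obtain ⟨i, rfl⟩ : ∃ i, j = i + 2 := ⟨j - 2, by omega⟩
    refine ⟨by omega, ?_, ?_⟩
    · have hi : i + 1 ∉ S := fun h => hsparse (i + 1) h hj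
      rw [show i + 2 - 1 = i + 1 by omega, getElem?_lukasPathOf_add_one (by omega), if_neg hi]
    · rw [getElem?_lukasPathOf_add_one (by omega), if_pos hj]

end

theorem exists_isLukas_fdPos_eq_iff {n : ℕ} (hn : 1 ≤ n) (S : Finset ℕ) :
    (∃ w : List ℤ, IsLukas w ∧ w.length = n ∧ fdPos w = S) ↔ S ∈ sparseSets (n - 1) := by
  constructor
  · rintro ⟨w, hw, rfl, rfl⟩
    exact fdPos_mem_sparseSets hw
  · intro hS
    refine ⟨lukasPathOf n S, isLukas_lukasPathOf fun j hj => ?_, length_lukasPathOf hn,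
      fdPos_lukasPathOf hS⟩
    have := Finset.mem_Icc.mp ((mem_sparseSets.mp hS).1 hj)
    exact Finset.mem_Ico.mpr (by omega)

theorem fd_position_sets (n : ℕ) (hn : 1 ≤ n) :
    (∀ S : Finset ℕ, S ⊆ Finset.Icc 1 n →
      ((∃ w : List ℤ, IsLukas w ∧ w.length = n ∧ fdPos w = S) ↔
        (S ⊆ Finset.Icc 2 (n - 1) ∧
          ∀ i ∈ S, ∀ j ∈ S, i ≠ j → 2 ≤ Nat.dist i j))) ∧
    Set.ncard {S : Finset ℕ |
        ∃ w : List ℤ, IsLukas w ∧ w.length = n ∧ fdPos w = S} = fibf n := by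
  refine ⟨fun S _ => ?_, ?_⟩
  · rw [exists_isLukas_fdPos_eq_iff hn, mem_sparseSets, two_le_dist_iff_add_one_notMem]
  · have hsets : {S : Finset ℕ | ∃ w : List ℤ, IsLukas w ∧ w.length = n ∧ fdPos w = S}
        = sparseSets (n - 1) :=
      Set.ext (exists_isLukas_fdPos_eq_iff hn)
    rw [hsets, Set.ncard_coe_finset, card_sparseSets, Nat.sub_add_cancel hn]
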